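/- Let a ≥ 3 be a real number and let P ∈ E_a(ℝ) be a point of infinite order. Then −(1/4)·log a − 0.16 < ( (1/2)·log max{1, |x(P)|} − (1/12)·log|Δ(E_a)| ) − λ_∞(P). -/

import Mathlib

open Filter Real

/-- The translated elliptic curve `E'_a : y² = x³ − 3√a·x² + 4a·x − 2a^{3/2}` over `ℝ`,
obtained from `E_a : y² = x³ + a·x` via `x ↦ x + √a`. -/
noncomputable def E'curve (a : ℝ) : WeierstrassCurve.Affine ℝ :=
  { a₁ := 0, a₂ := -3 * Real.sqrt a, a₃ := 0, a₄ := 4 * a, a₆ := -2 * a ^ ((3 : ℝ) / 2) }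

/-- The x-coordinate of a point (with junk value `0` at the identity `O`). -/
def xc {F : Type*} [Field F] {W : WeierstrassCurve.Affine F} : W.Point → F
  | .zero => 0
  | @WeierstrassCurve.Affine.Point.some _ _ _ x _ _ => x

/-- For a finite point `Q` of `E'_a` with `x(Q) = x`, the quantity
`z(Q) = 1 − 8a·x⁻² + 16·a^{3/2}·x⁻³ − 8a²·x⁻⁴` from Tate's series. -/
noncomputable def zE' (a x : ℝ) : ℝ :=
  1 - 8 * a / x ^ 2 + 16 * a ^ ((3 : ℝ) / 2) / x ^ 3 - 8 * a ^ 2 / x ^ 4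

/-- The archimedean local height of a point `P ∈ E_a(ℝ)` of infinite order (`a > 0`),
computed on the translated curve `E'_a` at the corresponding point `P'`:
`λ_∞(P) = (1/8)·log(x(P')⁴·z(P')) + (1/8)·S − (1/12)·log|Δ(E_a)|`, where `S` is the
(hypothesized) value of the series `∑_{k≥1} 4^{−k}·log z(2^kP')` and `Δ(E_a) = −64a³`. -/
noncomputable def lamInf' (a : ℝ) {W : WeierstrassCurve.Affine ℝ} (P' : W.Point) (S : ℝ) : ℝ :=
  (1 / 8) * Real.log ((xc P') ^ 4 * zE' a (xc P')) + (1 / 8) * S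
    - (1 / 12) * Real.log |(-64) * a ^ 3|

/-! Write `b = √a` and `u = x(P) = x(P') − b`, which is `≥ 0` because `y² = u³ + a·u`. Then
`x(P')⁴ · z(P') = b⁴ + 4b³u − 2b²u² + 4bu³ + u⁴` lies in `(0, x(P')⁴]`, so every `log z(2ᵏP')`
is `≤ 0` and `S ≤ 0`. The claim thus reduces to `x(P')⁴ · z(P') ≤ 3.53 · a² · max(1, u)⁴`, as
`log 3.53 / 8 < 0.16`. This quartic in `u` increases on `[0, 1]`, and for `u ≥ 1` it is at most
`u⁴` times its value at `u = 1` once `b² ≥ 3`; its value at `u = 1, b = √3` is just below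
`3.53 · 9`. -/

lemma rpow_three_halves_eq_sqrt_pow_three {a : ℝ} (ha : 0 ≤ a) : a ^ ((3 : ℝ) / 2) = √a ^ 3 := by
  rw [show (3 : ℝ) / 2 = 1 / 2 * (3 : ℕ) by norm_num, rpow_mul ha, ← sqrt_eq_rpow, rpow_natCast]

def tateQuartic (b x : ℝ) : ℝ := x ^ 4 - 8 * b ^ 2 * x ^ 2 + 16 * b ^ 3 * x - 8 * b ^ 4

lemma pow_four_mul_zE' {a x : ℝ} (ha : 0 ≤ a) (hx : x ≠ 0) :
    x ^ 4 * zE' a x = tateQuartic √a x := by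
  obtain ⟨b, hb, rfl⟩ : ∃ b, 0 ≤ b ∧ a = b ^ 2 := ⟨√a, sqrt_nonneg a, (sq_sqrt ha).symm⟩
  rw [zE', rpow_three_halves_eq_sqrt_pow_three ha, tateQuartic, sqrt_sq hb]
  field_simp

lemma tateQuartic_add (b u : ℝ) :
    tateQuartic b (b + u) = b ^ 4 + 4 * b ^ 3 * u - 2 * b ^ 2 * u ^ 2 + 4 * b * u ^ 3 + u ^ 4 := by
  unfold tateQuartic; ring

lemma tateQuartic_pos {b x : ℝ} (hb : 0 < b) (hbx : b ≤ x) : 0 < tateQuartic b x := by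
  obtain ⟨u, hu, rfl⟩ : ∃ u, 0 ≤ u ∧ x = b + u := ⟨x - b, by linarith, by ring⟩
  rw [tateQuartic_add]
  nlinarith [pow_pos hb 4, mul_nonneg (mul_nonneg hb.le hu) (sq_nonneg (b - u)),
    mul_nonneg (mul_nonneg hb.le hu) (sq_nonneg b), mul_nonneg (mul_nonneg hb.le hu) (sq_nonneg u),
    pow_nonneg hu 4]

lemma tateQuartic_le_pow_four (b x : ℝ) : tateQuartic b x ≤ x ^ 4 := by
  have : x ^ 4 - tateQuartic b x = 8 * (b * (x - b)) ^ 2 := by unfold tateQuartic; ring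
  linarith [sq_nonneg (b * (x - b))]

lemma tateQuartic_add_le_of_le_one {b u : ℝ} (hb : 0 ≤ b) (hu₀ : 0 ≤ u) (hu₁ : u ≤ 1) :
    tateQuartic b (b + u) ≤ tateQuartic b (b + 1) := by
  -- `tateQuartic b (b + 1) - tateQuartic b (b + u)` is `1 - u` times this factor
  have key : 0 ≤ 4 * b ^ 3 - 2 * b ^ 2 * (1 + u) + 4 * b * (1 + u + u ^ 2)
      + (1 + u) * (1 + u ^ 2) := by
    nlinarith [mul_nonneg hb (sq_nonneg (b - 1)), mul_nonneg (mul_nonneg hb hb) (sub_nonneg.2 hu₁),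
      mul_nonneg hb hu₀, mul_nonneg hb (sq_nonneg u)]
  have := mul_nonneg (sub_nonneg.2 hu₁) key
  rw [tateQuartic_add, tateQuartic_add]
  nlinarith

lemma tateQuartic_add_le_of_one_le {b u : ℝ} (hb : 3 ≤ b ^ 2) (hb₀ : 0 ≤ b) (hu : 1 ≤ u) :
    tateQuartic b (b + u) ≤ u ^ 4 * tateQuartic b (b + 1) := by
  have hu₂ : 1 ≤ u ^ 2 := one_le_pow₀ hu
  have hu₄ : u ^ 2 ≤ u ^ 4 := by nlinarith
  have h₁ : 0 ≤ (b ^ 2 - 3) * (u ^ 4 - 1) := mul_nonneg (by linarith) (by nlinarith)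
  have h₂ : 0 ≤ 4 * b ^ 3 * (u ^ 4 - u) := mul_nonneg (by positivity) (by nlinarith)
  have h₃ : 0 ≤ 4 * b * (u ^ 4 - u ^ 3) := mul_nonneg (by positivity) (by nlinarith)
  rw [tateQuartic_add, tateQuartic_add]
  nlinarith [mul_nonneg (sq_nonneg b) h₁,
    mul_nonneg (sq_nonneg b) (by linarith : 0 ≤ u ^ 4 + 2 * u ^ 2 - 3)]

lemma tateQuartic_add_one_le {b : ℝ} (hb : 3 ≤ b ^ 2) (hb₀ : 0 ≤ b) :
    tateQuartic b (b + 1) ≤ 3.53 * b ^ 4 := by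
  have hb' : (1.732 : ℝ) ≤ b := by nlinarith
  have hc := sub_nonneg.2 hb'
  rw [tateQuartic_add]
  nlinarith [sq_nonneg (b - 1.732), mul_nonneg (mul_nonneg hc hc) hc, sq_nonneg ((b - 1.732) ^ 2)]

lemma tateQuartic_le {b x : ℝ} (hb : 3 ≤ b ^ 2) (hb₀ : 0 ≤ b) (hbx : b ≤ x) :
    tateQuartic b x ≤ 3.53 * b ^ 4 * max 1 (x - b) ^ 4 := by
  obtain ⟨u, hu, rfl⟩ : ∃ u, 0 ≤ u ∧ x = b + u := ⟨x - b, by linarith, by ring⟩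
  have h₁ := tateQuartic_add_one_le hb hb₀
  rw [add_sub_cancel_left]
  rcases le_total u 1 with hu₁ | hu₁
  · rw [max_eq_left hu₁, one_pow, mul_one]
    exact (tateQuartic_add_le_of_le_one hb₀ hu hu₁).trans h₁
  · rw [max_eq_right hu₁, mul_comm _ (u ^ 4)]
    exact (tateQuartic_add_le_of_one_le hb hb₀ hu₁).trans (by gcongr)

lemma log_three_point_five_three_lt : log 3.53 < 1.28 := by
  have h₁ : log 3.53 = 2 * log 2 + log 0.8825 := by
    rw [← log_rpow two_pos, ← log_mul (by positivity) (by norm_num)]; norm_num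
  linarith [log_two_lt_d9, log_le_sub_one_of_pos (show (0 : ℝ) < 0.8825 by norm_num)]

namespace E'curve

lemma sqrt_le_of_equation {a x y : ℝ} (ha : 0 ≤ a) (h : (E'curve a).Equation x y) : √a ≤ x := by
  obtain ⟨b, hb, rfl⟩ : ∃ b, 0 ≤ b ∧ a = b ^ 2 := ⟨√a, sqrt_nonneg a, (sq_sqrt ha).symm⟩
  rw [sqrt_sq hb]
  rw [WeierstrassCurve.Affine.equation_iff] at h
  simp only [E'curve, rpow_three_halves_eq_sqrt_pow_three ha, sqrt_sq hb] at h
  have hy : y ^ 2 = (x - b) * ((x - b) ^ 2 + b ^ 2) := by linear_combination h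
  by_contra! hx
  nlinarith [sq_nonneg y, pow_pos (sub_pos.2 hx) 3, mul_nonneg (sub_pos.2 hx).le (sq_nonneg b)]

lemma log_zE'_xc_nonpos {a : ℝ} (ha : 0 < a) (Q : (E'curve a).Point) :
    log (zE' a (xc Q)) ≤ 0 := by
  cases Q with
  | zero => simp [xc, zE']
  | some x y h =>
    have hx : √a ≤ x := sqrt_le_of_equation ha.le h.1
    have hx₀ : 0 < x := (sqrt_pos.2 ha).trans_le hx
    have hz : zE' a x = tateQuartic √a x / x ^ 4 := by
      rw [← pow_four_mul_zE' ha.le hx₀.ne']; field_simp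
    rw [xc, hz]
    apply log_nonpos
    · exact div_nonneg (tateQuartic_pos (sqrt_pos.2 ha) hx).le (by positivity)
    · exact div_le_one_of_le₀ (tateQuartic_le_pow_four _ _) (by positivity)

lemma log_pow_four_mul_zE'_le {a : ℝ} (ha : 3 ≤ a) (Q : (E'curve a).Point) :
    log (xc Q ^ 4 * zE' a (xc Q)) ≤ log 3.53 + 4 * log (max 1 |xc Q - √a|) + 2 * log a := by
  have ha₀ : 0 ≤ a := by linarith
  cases Q with
  | zero =>
    simp only [xc, zero_pow four_ne_zero, zero_mul, log_zero]
    linarith [log_nonneg (show (1 : ℝ) ≤ 3.53 by norm_num),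
      log_nonneg (show (1 : ℝ) ≤ a by linarith), log_nonneg (le_max_left 1 |0 - √a|)]
  | some x y h =>
    have hx : √a ≤ x := sqrt_le_of_equation ha₀ h.1
    have hb : 3 ≤ √a ^ 2 := by rwa [sq_sqrt ha₀]
    have hb₀ : 0 < √a := sqrt_pos.2 (by linarith)
    rw [xc, pow_four_mul_zE' ha₀ (hb₀.trans_le hx).ne', abs_of_nonneg (sub_nonneg.2 hx)]
    calc log (tateQuartic √a x) ≤ log (3.53 * √a ^ 4 * max 1 (x - √a) ^ 4) :=
          log_le_log (tateQuartic_pos hb₀ hx) (tateQuartic_le hb hb₀.le hx)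
      _ = log 3.53 + 4 * log (max 1 (x - √a)) + 2 * log a := by
          rw [log_mul (by positivity) (by positivity), log_mul (by norm_num) (by positivity),
            log_pow, log_pow, log_sqrt ha₀]
          push_cast; ring

end E'curve

theorem arch_a_pos_part_c_general (a : ℝ) (ha : 3 ≤ a)
    (P' : (E'curve a).Point)
    (S : ℝ)
    (hS : HasSum
      (fun k : ℕ => (1 / 4 : ℝ) ^ (k + 1) * Real.log (zE' a (xc ((2 ^ (k + 1)) • P')))) S) :
    -(1 / 4) * Real.log a - 0.16
        < ((1 / 2) * Real.log (max 1 |xc P' - Real.sqrt a|)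
              - (1 / 12) * Real.log |(-64) * a ^ 3|)
            - lamInf' a P' S := by
  have hS₀ : S ≤ 0 := hasSum_le (fun k => mul_nonpos_of_nonneg_of_nonpos (by positivity)
    (E'curve.log_zE'_xc_nonpos (by linarith) _)) hS hasSum_zero
  have hlog := E'curve.log_pow_four_mul_zE'_le ha P'
  rw [lamInf']
  linarith [log_three_point_five_three_lt]

/-- Lemma 3.4(c): for `a ≥ 3` and a point `P ∈ E_a(ℝ)` of infinite order (given by the
corresponding point `P'` on the translated curve `E'_a`, so `x(P) = x(P') − √a`),
`−(1/4)·log a − 0.16 < ((1/2)·log max{1,|x(P)|} − (1/12)·log|Δ(E_a)|) − λ_∞(P)`. -/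
theorem arch_a_pos_part_c (a : ℝ) (ha : 3 ≤ a)
    (P' : (E'curve a).Point)
    (hP : ∀ n : ℕ, 0 < n → n • P' ≠ 0)
    (S : ℝ)
    (hS : HasSum
      (fun k : ℕ => (1 / 4 : ℝ) ^ (k + 1) * Real.log (zE' a (xc ((2 ^ (k + 1)) • P')))) S) :
    -(1 / 4) * Real.log a - 0.16
        < ((1 / 2) * Real.log (max 1 |xc P' - Real.sqrt a|)
              - (1 / 12) * Real.log |(-64) * a ^ 3|)
            - lamInf' a P' S :=
  arch_a_pos_part_c_general a ha P' S hS
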